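/- Let q be transcendental over ℚ and let A = ⊗_{i=1}^{k} ℂ[aᵢ^{±1}, bᵢ]^q be the algebra generated by invertible aᵢ and bᵢ with bᵢaᵢ = q aᵢbᵢ and with generators of different indices commuting. Let each Aᵢ be (aᵢ, bᵢ; 0, aᵢ⁻¹) or (aᵢ, 0; bᵢ, aᵢ⁻¹), and let t₀ = Trace A₁⁽⁰⁾⋯A_k⁽⁰⁾ ∈ ℤ, where Aᵢ⁽⁰⁾ is obtained by setting aᵢ = bᵢ = 1. Then T_n(Trace A₁⋯A_k) is a sum of exactly T_n(t₀) monomials of the form q^ξ ∏ᵢ aᵢ^{αᵢ} bᵢ^{βᵢ} with ξ, αᵢ ∈ ℤ, βᵢ ≥ 0, each with coefficient +1. -/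

import Mathlib

/-- The normalized Chebyshev polynomial of the first kind, evaluated in a ring:
`T_{n+1}(t) = t·T_n(t) − T_{n−1}(t)`, `T_1(t) = t`, `T_0(t) = 2`. -/
def chebT {A : Type*} [Ring A] : ℕ → A → A
  | 0, _ => 2
  | 1, t => t
  | n + 2, t => t * chebT (n + 1) t - chebT n t

/-- The triangular matrix `(a, b; 0, a⁻¹)` (if `upper`) or `(a, 0; b, a⁻¹)` (if not). -/
def triMat {A : Type*} [Ring A] (upper : Bool) (a : Aˣ) (b : A) :
    Matrix (Fin 2) (Fin 2) A :=
  if upper then !![(a : A), b; 0, ((a⁻¹ : Aˣ) : A)]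
  else !![(a : A), 0; b, ((a⁻¹ : Aˣ) : A)]

/-- The monomial `∏ᵢ aᵢ^{αᵢ} ∏ᵢ bᵢ^{βᵢ}` associated to exponents
`m = (α, β) : (Fin k → ℤ) × (Fin k → ℕ)`. -/
def qMonomial {A : Type*} [Ring A] {k : ℕ} (a : Fin k → Aˣ) (b : Fin k → A)
    (m : (Fin k → ℤ) × (Fin k → ℕ)) : A :=
  (List.ofFn fun i => ((a i ^ m.1 i : Aˣ) : A)).prod *
    (List.ofFn fun i => b i ^ m.2 i).prod

/-!
Everything happens in the ring `A × ℤ`, whose second coordinate counts monomials. Let `G` be the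
submonoid of `A` generated by the `aᵢ^{±1}` and `bᵢ`. The pairs `(g₁ + ⋯ + gₘ, m)` with `gⱼ ∈ G`
form a subsemiring `S` of `A × ℤ`, and the matrices `triMat` built from `(aᵢ, 1)` and `(bᵢ, 1)`
project to `Aᵢ` and to `Aᵢ⁽⁰⁾`; so it suffices to show that `T_n` of the trace of their product
lies in `S`. That trace is `X + X⁻¹ + r` with `X = ∏ (aᵢ, 1)` and `r ∈ S`, and for any subsemiring
containing `X^{±1}` and `r` the Chebyshev recursion stays inside it, since the only cancellations
it needs come from `X * X⁻¹ = 1`. Finally, the `q`-commutation relations turn every element of `G`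
into some `q^ξ ∏ aᵢ^{αᵢ} ∏ bᵢ^{βᵢ}`.
-/

theorem mul_prod_ofFn_eq_prod_ofFn_update {M : Type*} [Monoid M] :
    ∀ {k : ℕ} (f : Fin k → M) (i : Fin k) {x : M}, (∀ j ≠ i, Commute x (f j)) →
      x * (List.ofFn f).prod = (List.ofFn (Function.update f i (x * f i))).prod
  | 0, _, i, _, _ => i.elim0
  | k + 1, f, i, x, h => by
    simp only [List.ofFn_succ, List.prod_cons]
    induction i using Fin.cases with
    | zero => simp [mul_assoc]
    | succ i =>
      rw [Function.update_of_ne (Fin.succ_ne_zero i).symm,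
        (h 0 (Fin.succ_ne_zero i).symm).left_comm,
        mul_prod_ofFn_eq_prod_ofFn_update (fun j => f j.succ) i
          fun j hj => h j.succ (by simpa using hj)]
      congr 3
      exact (Function.update_comp_eq_of_injective f (Fin.succ_injective k) i _).symm

theorem mul_prod_ofFn_eq_smul_prod_ofFn_mul {K A : Type*} [CommSemiring K] [Semiring A]
    [Algebra K A] :
    ∀ {k : ℕ} (f : Fin k → A) (i : Fin k) {x : A} {c : K}, (∀ j ≠ i, Commute x (f j)) →
      x * f i = c • (f i * x) → x * (List.ofFn f).prod = c • ((List.ofFn f).prod * x)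
  | 0, _, i, _, _, _, _ => i.elim0
  | k + 1, f, i, x, c, h, hi => by
    simp only [List.ofFn_succ, List.prod_cons]
    induction i using Fin.cases with
    | zero =>
      have hrest : Commute x (List.ofFn fun j => f j.succ).prod :=
        Commute.list_prod_right _ _ fun y hy => by
          obtain ⟨j, rfl⟩ := List.mem_ofFn.mp hy
          exact h j.succ (Fin.succ_ne_zero j)
      rw [← mul_assoc, hi, smul_mul_assoc, mul_assoc, hrest.eq, mul_assoc]
    | succ i =>
      rw [← mul_assoc, (h 0 (Fin.succ_ne_zero i).symm).eq, mul_assoc,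
        mul_prod_ofFn_eq_smul_prod_ofFn_mul (fun j => f j.succ) i
          (fun j hj => h j.succ (by simpa using hj)) hi,
        mul_smul_comm, mul_assoc]

theorem mul_units_zpow_eq_smul {K A : Type*} [Field K] [Ring A] [Algebra K A] {q : K}
    (hq : q ≠ 0) {u : Aˣ} {x : A} (h : x * u = q • (u * x)) (z : ℤ) :
    x * ↑(u ^ z) = q ^ z • (↑(u ^ z) * x) := by
  induction z using Int.induction_on with
  | zero => simp
  | succ z ih =>
    rw [zpow_add_one, Units.val_mul, ← mul_assoc, ih, smul_mul_assoc, mul_assoc, h, mul_smul_comm,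
      smul_smul, ← zpow_add_one₀ hq, mul_assoc]
  | pred z ih =>
    apply (Units.mul_left_inj u).mp
    rw [smul_mul_assoc, mul_assoc, mul_assoc, ← Units.val_mul, ← zpow_add_one, sub_add_cancel, ih,
      h, mul_smul_comm, smul_smul, ← zpow_add_one₀ hq, sub_add_cancel, ← mul_assoc, ← Units.val_mul,
      ← zpow_add_one, sub_add_cancel]

theorem Units.val_prod_ofFn {M : Type*} [Monoid M] {k : ℕ} (u : Fin k → Mˣ) :
    ((List.ofFn u).prod : M) = (List.ofFn fun i => (u i : M)).prod := by
  rw [← Units.coeHom_apply, map_list_prod, List.map_ofFn]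
  rfl

theorem prod_ofFn_inv_of_pairwise_commute {G : Type*} [Group G] {k : ℕ} (u : Fin k → G)
    (h : Pairwise fun i j => Commute (u i) (u j)) :
    (List.ofFn fun i => (u i)⁻¹).prod = (List.ofFn u).prod⁻¹ := by
  rw [List.prod_inv_reverse, List.map_ofFn]
  exact (List.reverse_perm _).symm.prod_eq'
    (List.pairwise_ofFn.mpr fun i j hij => (h hij.ne).inv_inv)

namespace Subsemiring

variable {R : Type*} [Ring R] (S : Subsemiring R)

theorem mul_sub_mul_mem {x y x' y' : R} (h : x - y ∈ S) (h' : x' - y' ∈ S) (hy : y ∈ S)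
    (hy' : y' ∈ S) : x * x' - y * y' ∈ S := by
  rw [show x * x' - y * y' = (x - y) * (x' - y') + (x - y) * y' + y * (x' - y') by noncomm_ring]
  exact add_mem (add_mem (mul_mem h h') (mul_mem h hy')) (mul_mem hy h')

theorem prod_ofFn_sub_prod_ofFn_mem : ∀ {k : ℕ} (f g : Fin k → R), (∀ i, f i - g i ∈ S) →
    (∀ i, g i ∈ S) → (List.ofFn f).prod - (List.ofFn g).prod ∈ S
  | 0, _, _, _, _ => by simp
  | k + 1, f, g, hfg, hg => by
    simp only [List.ofFn_succ, List.prod_cons]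
    exact S.mul_sub_mul_mem (hfg 0) (prod_ofFn_sub_prod_ofFn_mem _ _ (fun i => hfg i.succ)
      fun i => hg i.succ) (hg 0) (S.list_prod_mem (by simp [List.mem_ofFn, hg]))

end Subsemiring

section Chebyshev

variable {R R' : Type*} [Ring R] [Ring R']

theorem map_chebT {F : Type*} [FunLike F R R'] [RingHomClass F R R'] (f : F) (t : R) :
    ∀ n, f (chebT n t) = chebT n (f t)
  | 0 => map_ofNat f 2
  | 1 => rfl
  | n + 2 => by simp only [chebT, map_sub, map_mul, map_chebT f t n, map_chebT f t (n + 1)]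

/-- Split `chebT n t = P + Q` so that `P' - X * P` and `Q' - X⁻¹ * Q` lie in `S`, where
`chebT (n + 1) t = P' + Q'`. The recursion then subtracts `P = X⁻¹ * (X * P)` and
`Q = X * (X⁻¹ * Q)`, which are absorbed by `X⁻¹ * P'` and `X * Q'`. -/
theorem chebT_add_units_mem (S : Subsemiring R) (X : Rˣ) (hX : (X : R) ∈ S)
    (hX' : ((X⁻¹ : Rˣ) : R) ∈ S) {r : R} (hr : r ∈ S) (n : ℕ) :
    chebT n (X + X⁻¹ + r) ∈ S := by
  set t : R := X + X⁻¹ + r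
  suffices ∀ n, ∃ P ∈ S, ∃ Q ∈ S, ∃ P' Q', P' - X * P ∈ S ∧ Q' - X⁻¹ * Q ∈ S ∧
      chebT n t = P + Q ∧ chebT (n + 1) t = P' + Q' by
    obtain ⟨P, hP, Q, hQ, -, -, -, -, h, -⟩ := this n
    exact h ▸ add_mem hP hQ
  intro n
  induction n with
  | zero =>
    refine ⟨1, one_mem S, 1, one_mem S, X + r, ↑X⁻¹, by simpa, by simp,
      by simp [chebT, one_add_one_eq_two], ?_⟩
    simp only [chebT, t]
    abel
  | succ n ih =>
    obtain ⟨P, hP, Q, hQ, P', Q', hDP, hDQ, hT, hT'⟩ := ih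
    have hP' : P' ∈ S := by simpa using add_mem (mul_mem hX hP) hDP
    have hQ' : Q' ∈ S := by simpa using add_mem (mul_mem hX' hQ) hDQ
    refine ⟨P', hP', Q', hQ', X * P' + (X * (Q' - X⁻¹ * Q) + r * (P' + Q')),
      X⁻¹ * Q' + X⁻¹ * (P' - X * P), ?_, ?_, hT', ?_⟩
    · simpa using add_mem (mul_mem hX hDQ) (mul_mem hr (add_mem hP' hQ'))
    · simpa using mul_mem hX' hDP
    · simp only [chebT, hT, hT', t, mul_sub, Units.mul_inv_cancel_left, Units.inv_mul_cancel_left,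
        add_mul, mul_add]
      abel

end Chebyshev

theorem triMat_one_one {R : Type*} [Ring R] (upper : Bool) :
    triMat upper (1 : Rˣ) 1 = if upper then !![1, 1; 0, 1] else !![1, 0; 1, 1] := by
  cases upper <;> simp [triMat]

theorem map_trace_prod_triMat {R R' : Type*} [Ring R] [Ring R'] (f : R →+* R') {k : ℕ}
    (upper : Fin k → Bool) (u : Fin k → Rˣ) (c : Fin k → R) :
    f (Matrix.trace (List.ofFn fun i => triMat (upper i) (u i) (c i)).prod) =
      Matrix.trace (List.ofFn fun i => triMat (upper i) (Units.map f (u i)) (f (c i))).prod := by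
  rw [AddMonoidHom.map_trace f, ← RingHom.mapMatrix_apply, map_list_prod, List.map_ofFn]
  congr 3
  ext i : 1
  cases hi : upper i <;> ext j l <;> fin_cases j <;> fin_cases l <;> simp [triMat, hi]

open Matrix in
theorem exists_trace_prod_triMat_eq {R : Type*} [Ring R] (S : Subsemiring R) {k : ℕ}
    (upper : Fin k → Bool) (u : Fin k → Rˣ) (c : Fin k → R) (hu : ∀ i, (u i : R) ∈ S)
    (hu' : ∀ i, (((u i)⁻¹ : Rˣ) : R) ∈ S) (hc : ∀ i, c i ∈ S) :
    ∃ r ∈ S, trace (List.ofFn fun i => triMat (upper i) (u i) (c i)).prod =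
      ↑(List.ofFn u).prod + ↑(List.ofFn fun i => (u i)⁻¹).prod + r := by
  let d : Fin k → Fin 2 → R := fun i => ![u i, ((u i)⁻¹ : Rˣ)]
  have hsub := S.matrix.prod_ofFn_sub_prod_ofFn_mem (fun i => triMat (upper i) (u i) (c i))
    (fun i => diagonal (d i))
    (fun i j l => by fin_cases j <;> fin_cases l <;> cases upper i <;> simp [triMat, d, hc])
    (fun i j l => by fin_cases j <;> fin_cases l <;> simp [d, hu, hu'])
  refine ⟨trace ((List.ofFn fun i => triMat (upper i) (u i) (c i)).prod -
    (List.ofFn fun i => diagonal (d i)).prod), sum_mem fun j _ => hsub j j, ?_⟩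
  have hdiag : (List.ofFn fun i => diagonal (d i)).prod =
      diagonal fun j => (List.ofFn fun i => d i j).prod := by
    change (List.ofFn (diagonalRingHom (Fin 2) R ∘ d)).prod = _
    rw [← List.map_ofFn, ← map_list_prod, diagonalRingHom_apply]
    congr 1
    ext j
    rw [Pi.list_prod_apply, List.map_ofFn]
    rfl
  rw [trace_sub, hdiag, trace_diagonal, Fin.sum_univ_two, Units.val_prod_ofFn, Units.val_prod_ofFn]
  simp [d]

theorem chebT_trace_prod_triMat_mem {R : Type*} [Ring R] (S : Subsemiring R) {k : ℕ}
    (upper : Fin k → Bool) (u : Fin k → Rˣ) (c : Fin k → R)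
    (hcomm : Pairwise fun i j => Commute (u i) (u j)) (hu : ∀ i, (u i : R) ∈ S)
    (hu' : ∀ i, (((u i)⁻¹ : Rˣ) : R) ∈ S) (hc : ∀ i, c i ∈ S) (n : ℕ) :
    chebT n (Matrix.trace (List.ofFn fun i => triMat (upper i) (u i) (c i)).prod) ∈ S := by
  obtain ⟨r, hr, htr⟩ := exists_trace_prod_triMat_eq S upper u c hu hu' hc
  rw [htr, prod_ofFn_inv_of_pairwise_commute u hcomm]
  refine chebT_add_units_mem S _ ?_ ?_ hr n
  · rw [Units.val_prod_ofFn]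
    exact S.list_prod_mem (by simp [List.mem_ofFn, hu])
  · rw [← prod_ofFn_inv_of_pairwise_commute u hcomm, Units.val_prod_ofFn]
    exact S.list_prod_mem (by simp [List.mem_ofFn, hu'])

namespace Submonoid

variable {A : Type*} [Ring A] (G : Submonoid A)

def countedSums : Subsemiring (A × ℤ) where
  carrier := {p | ∃ W : Multiset G, ((W.map (↑)).sum, (Multiset.card W : ℤ)) = p}
  zero_mem' := ⟨0, by simp⟩
  one_mem' := ⟨{1}, by simp⟩
  add_mem' := by
    rintro _ _ ⟨W, rfl⟩ ⟨W', rfl⟩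
    exact ⟨W + W', by simp⟩
  mul_mem' := by
    rintro _ _ ⟨W, rfl⟩ ⟨W', rfl⟩
    refine ⟨W.bind fun g => W'.map (g * ·), ?_⟩
    simp [Multiset.map_bind, Multiset.sum_bind, Multiset.map_map, Multiset.sum_map_mul_left,
      Multiset.sum_map_mul_right, Multiset.card_bind]

theorem mk_one_mem_countedSums {g : A} (hg : g ∈ G) : (g, 1) ∈ G.countedSums :=
  ⟨{⟨g, hg⟩}, by simp⟩

theorem exists_multiset_chebT_trace_prod_triMat {k : ℕ} (upper : Fin k → Bool) (a : Fin k → Aˣ)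
    (b : Fin k → A) (hcomm : Pairwise fun i j => Commute (a i : A) (a j)) (ha : ∀ i, (a i : A) ∈ G)
    (ha' : ∀ i, (((a i)⁻¹ : Aˣ) : A) ∈ G) (hb : ∀ i, b i ∈ G) (n : ℕ) :
    ∃ W : Multiset G,
      (W.map (↑)).sum =
        chebT n (Matrix.trace (List.ofFn fun i => triMat (upper i) (a i) (b i)).prod) ∧
      (Multiset.card W : ℤ) =
        chebT n (Matrix.trace (List.ofFn fun i => triMat (upper i) (1 : ℤˣ) 1).prod) := by
  let u : Fin k → (A × ℤ)ˣ := fun i => MulEquiv.prodUnits.symm (a i, 1)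
  obtain ⟨W, hW⟩ := chebT_trace_prod_triMat_mem G.countedSums upper u (fun i => (b i, 1))
    (fun i j hij => Units.ext (Prod.ext (hcomm hij).eq rfl))
    (fun i => G.mk_one_mem_countedSums (ha i)) (fun i => G.mk_one_mem_countedSums (ha' i))
    (fun i => G.mk_one_mem_countedSums (hb i)) n
  refine ⟨W, ?_, ?_⟩
  · have h := congrArg (RingHom.fst A ℤ) hW
    rwa [map_chebT, map_trace_prod_triMat] at h
  · have h := congrArg (RingHom.snd A ℤ) hW
    rwa [map_chebT, map_trace_prod_triMat] at h

end Submonoid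

section qMonomial

variable {A : Type*} [Ring A] {k : ℕ} (a : Fin k → Aˣ) (b : Fin k → A)

theorem qMonomial_zero : qMonomial a b 0 = 1 := by
  simp [qMonomial]

theorem units_zpow_mul_qMonomial {i : Fin k} (hca : ∀ j ≠ i, Commute (a i : A) (a j)) (z : ℤ)
    (m : (Fin k → ℤ) × (Fin k → ℕ)) :
    ↑(a i ^ z) * qMonomial a b m = qMonomial a b (m.1 + Pi.single i z, m.2) := by
  rw [qMonomial, qMonomial, ← mul_assoc, mul_prod_ofFn_eq_prod_ofFn_update _ i
    fun j hj => ((hca j hj).units_zpow_left z).units_zpow_right _]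
  congr 3
  ext j
  rcases eq_or_ne j i with rfl | hj
  · simp [← Units.val_mul, ← zpow_add, add_comm]
  · simp [hj]

theorem mul_qMonomial {K : Type*} [Field K] [Algebra K A] {q : K} (hq : q ≠ 0) {i : Fin k}
    (hba : b i * a i = q • (↑(a i) * b i)) (hcba : ∀ j ≠ i, Commute (b i) (a j))
    (hcbb : ∀ j ≠ i, Commute (b i) (b j)) (m : (Fin k → ℤ) × (Fin k → ℕ)) :
    b i * qMonomial a b m = q ^ m.1 i • qMonomial a b (m.1, m.2 + Pi.single i 1) := by
  rw [qMonomial, qMonomial, ← mul_assoc, mul_prod_ofFn_eq_smul_prod_ofFn_mul _ i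
    (fun j hj => (hcba j hj).units_zpow_right _) (mul_units_zpow_eq_smul hq hba _),
    smul_mul_assoc, mul_assoc, mul_prod_ofFn_eq_prod_ofFn_update _ i
    fun j hj => (hcbb j hj).pow_right _]
  congr 4
  ext j
  rcases eq_or_ne j i with rfl | hj
  · simp [pow_succ']
  · simp [hj]

theorem exists_eq_zpow_smul_qMonomial_of_mem_closure {K : Type*} [Field K] [Algebra K A] {q : K}
    (hq : q ≠ 0) (hba : ∀ i, b i * a i = q • (↑(a i) * b i))
    (hca : Pairwise fun i j => Commute (a i : A) (a j))
    (hcba : Pairwise fun i j => Commute (b i) (a j))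
    (hcbb : Pairwise fun i j => Commute (b i) (b j))
    {g : A} (hg : g ∈ Submonoid.closure
      (Set.range (fun p : Fin k × ℤ => ((a p.1 ^ p.2 : Aˣ) : A)) ∪ Set.range b)) :
    ∃ p : ℤ × (Fin k → ℤ) × (Fin k → ℕ), g = q ^ p.1 • qMonomial a b p.2 := by
  induction hg using Submonoid.closure_induction_left with
  | one => exact ⟨(0, 0), by simp [qMonomial_zero]⟩
  | mul_left x hx y _ ih =>
    obtain ⟨⟨ξ, m⟩, rfl⟩ := ih
    rcases hx with ⟨⟨i, z⟩, rfl⟩ | ⟨i, rfl⟩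
    · refine ⟨(ξ, m.1 + Pi.single i z, m.2), ?_⟩
      rw [mul_smul_comm, units_zpow_mul_qMonomial a b (fun j hj => hca hj.symm)]
    · refine ⟨(ξ + m.1 i, m.1, m.2 + Pi.single i 1), ?_⟩
      rw [mul_smul_comm, mul_qMonomial a b hq (hba i) (fun j hj => hcba hj.symm)
        (fun j hj => hcbb hj.symm), smul_smul, ← zpow_add₀ hq]

end qMonomial

theorem chebT_trace_monomial_count_general {A : Type*} [Ring A] [Algebra ℂ A]
    (q : ℂ) (hq : Transcendental ℚ q) {k : ℕ}
    (a : Fin k → Aˣ) (b : Fin k → A) (upper : Fin k → Bool)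
    (hba : ∀ i, b i * (a i : A) = q • ((a i : A) * b i))
    (hcomm : ∀ i j, i ≠ j →
      Commute ((a i : A)) ((a j : A)) ∧ Commute ((a i : A)) (b j) ∧
      Commute (b i) ((a j : A)) ∧ Commute (b i) (b j))
    (n : ℕ) :
    ∃ s : Multiset (ℤ × (Fin k → ℤ) × (Fin k → ℕ)),
      Multiset.card s =
        (chebT n (Matrix.trace
          (List.ofFn fun i =>
            if upper i then !![(1 : ℤ), 1; 0, 1] else !![1, 0; 1, 1]).prod)).toNat ∧
      chebT n (Matrix.trace (List.ofFn fun i => triMat (upper i) (a i) (b i)).prod)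
        = (s.map fun m => q ^ m.1 • qMonomial a b m.2).sum := by
  have hq0 : q ≠ 0 := fun h => hq (h ▸ isAlgebraic_zero)
  set G := Submonoid.closure
    (Set.range (fun p : Fin k × ℤ => ((a p.1 ^ p.2 : Aˣ) : A)) ∪ Set.range b)
  have ha : ∀ i (z : ℤ), ((a i ^ z : Aˣ) : A) ∈ G :=
    fun i z => Submonoid.subset_closure (Or.inl ⟨(i, z), rfl⟩)
  obtain ⟨W, hsum, hcard⟩ := G.exists_multiset_chebT_trace_prod_triMat upper a b
    (fun i j hij => (hcomm i j hij).1) (fun i => by simpa using ha i 1)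
    (fun i => by simpa using ha i (-1)) (fun i => Submonoid.subset_closure (Or.inr ⟨i, rfl⟩)) n
  choose p hp using fun g : G => exists_eq_zpow_smul_qMonomial_of_mem_closure a b hq0 hba
    (fun i j hij => (hcomm i j hij).1) (fun i j hij => (hcomm i j hij).2.2.1)
    (fun i j hij => (hcomm i j hij).2.2.2) g.2
  refine ⟨W.map p, ?_, ?_⟩
  · simp only [triMat_one_one] at hcard
    rw [Multiset.card_map, ← hcard, Int.toNat_natCast]
  · rw [← hsum, Multiset.map_map]
    exact congrArg Multiset.sum (Multiset.map_congr rfl fun g _ => hp g)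

/-- Positivity and exact count of monomials: if `q` is transcendental and the monomials
`∏ aᵢ^{αᵢ} bᵢ^{βᵢ}` are linearly independent (i.e. `A = ⊗ᵢ ℂ[aᵢ^{±1}, bᵢ]^q`), then
`T_n(Trace A₁⋯A_k)` is a sum of exactly `T_n(t₀)` monomials `q^ξ ∏ᵢ aᵢ^{αᵢ} bᵢ^{βᵢ}`,
each with coefficient `+1`, where `t₀ = Trace A₁⁽⁰⁾⋯A_k⁽⁰⁾`. -/
theorem chebT_trace_monomial_count {A : Type*} [Ring A] [Algebra ℂ A]
    (q : ℂ) (hq : Transcendental ℚ q) {k : ℕ}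
    (a : Fin k → Aˣ) (b : Fin k → A) (upper : Fin k → Bool)
    (hba : ∀ i, b i * (a i : A) = q • ((a i : A) * b i))
    (hcomm : ∀ i j, i ≠ j →
      Commute ((a i : A)) ((a j : A)) ∧ Commute ((a i : A)) (b j) ∧
      Commute (b i) ((a j : A)) ∧ Commute (b i) (b j))
    (hind : LinearIndependent ℂ (fun m : (Fin k → ℤ) × (Fin k → ℕ) => qMonomial a b m))
    (n : ℕ) :
    ∃ s : Multiset (ℤ × (Fin k → ℤ) × (Fin k → ℕ)),
      Multiset.card s =
        (chebT n (Matrix.trace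
          (List.ofFn fun i =>
            if upper i then !![(1 : ℤ), 1; 0, 1] else !![1, 0; 1, 1]).prod)).toNat ∧
      chebT n (Matrix.trace (List.ofFn fun i => triMat (upper i) (a i) (b i)).prod)
        = (s.map fun m => q ^ m.1 • qMonomial a b m.2).sum :=
  chebT_trace_monomial_count_general q hq a b upper hba hcomm n
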